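/- Let X be a complex of k-vector spaces with finite-dimensional nonzero cohomology, with homotopy data p, i, H as above, and let Harm•(X) = im(ip). For n with H^n(X) ≠ 0, let π be the projection of Harm(X) onto Harm^n(X) and Π = π i p ∈ End⁰_k(X). Then Π − p π i = b(π i [p]) in the Hochschild chain complex of the DG category Perf k; in particular Π and the projection p π i ∈ End_k(H•(X)) define the same class in HH₀(Perf k), and this class equals (−1)^n dim H^n(X). -/
import Mathlib


open scoped TensorProduct

noncomputable section

/-- `(−1)^m` as an element of `k`, for `m : ℤ`. -/
def sgnz (k : Type*) [Field k] (m : ℤ) : k := if Even m then 1 else -1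

/-- Let `X = (V, dX)` be a complex of `k`-vector spaces with
finite-dimensional nonzero cohomology `W = H•(X)`, with homotopy data `p, i, H`, and let
`Harm•(X) = im(ip)`.  For `n` with `H^n(X) ≠ 0`, let `π` be the projection of `Harm(X)`
onto `Harm^n(X)` (equivalently `π i = i π_W`, where `π_W` projects `W` onto `H^n`) and
`Π = π i p`.  Then in the Hochschild chain complex of the two-object DG category with
objects `X` and `H•(X)` one has `Π − p π i = b(π i [p])`: explicitly,
`b₀(π i [p]) = 0` and `b₁(π i [p]) = (Π, 0) − (0, p π i)`; in particular `Π` and `p π i`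
define the same class in `HH₀(Perf k)`, and this class equals `(−1)^n dim H^n(X)`
(as the supertrace: `str_W(π_W) = (−1)^n dim H^n(X)`). -/
theorem stmt15 {k V W : Type*} [Field k]
    [AddCommGroup V] [Module k V] [AddCommGroup W] [Module k W] [FiniteDimensional k W]
    (ℬ : ℤ → Submodule k V) (hint : DirectSum.IsInternal ℬ)
    (ℬW : ℤ → Submodule k W) (hintW : DirectSum.IsInternal ℬW)
    (dX : V →ₗ[k] V)
    (hdX : ∀ m : ℤ, ∀ v ∈ ℬ m, dX v ∈ ℬ (m + 1)) (hdXsq : ∀ v, dX (dX v) = 0)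
    (p : V →ₗ[k] W) (i : W →ₗ[k] V) (H : V →ₗ[k] V)
    (hp : ∀ m : ℤ, ∀ v ∈ ℬ m, p v ∈ ℬW m) (hi : ∀ m : ℤ, ∀ w ∈ ℬW m, i w ∈ ℬ m)
    (hH : ∀ m : ℤ, ∀ v ∈ ℬ m, H v ∈ ℬ (m - 1))
    (hpd : ∀ v, p (dX v) = 0) (hdi : ∀ w, dX (i w) = 0)
    (hpi : ∀ w, p (i w) = w)
    (hip : ∀ v, i (p v) = v - dX (H v) - H (dX v))
    (εW : W →ₗ[k] W)
    (hεW : ∀ m : ℤ, ∀ w ∈ ℬW m, εW w = sgnz k m • w)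
    -- the degree `n` with `H^n(X) ≠ 0`, and the projection `π_W` of `W` onto `H^n(X)`
    (n : ℤ) (hn : ℬW n ≠ ⊥)
    (πW : W →ₗ[k] W)
    (hπW₁ : ∀ w ∈ ℬW n, πW w = w)
    (hπW₂ : ∀ m : ℤ, m ≠ n → ∀ w ∈ ℬW m, πW w = 0)
    -- the Hochschild differential on 1-chains over the two objects `X` and `H•(X)`:
    -- `b₀ : Hom(W,V) ⊗ Hom(V,W) → Hom(W,V) ⊗ Hom(V,W)` and
    -- `b₁ : Hom(W,V) ⊗ Hom(V,W) → End(V) × End(W)`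
    (b0 : (W →ₗ[k] V) ⊗[k] (V →ₗ[k] W) →ₗ[k] (W →ₗ[k] V) ⊗[k] (V →ₗ[k] W))
    (b1 : (W →ₗ[k] V) ⊗[k] (V →ₗ[k] W) →ₗ[k] Module.End k V × Module.End k W)
    (hb0 : ∀ (q₀ q₁ : ℤ) (f : W →ₗ[k] V) (g : V →ₗ[k] W),
      (∀ m : ℤ, ∀ w ∈ ℬW m, f w ∈ ℬ (m + q₀)) →
      (∀ m : ℤ, ∀ v ∈ ℬ m, g v ∈ ℬW (m + q₁)) →
      b0 (f ⊗ₜ[k] g) =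
        (dX ∘ₗ f) ⊗ₜ[k] g + sgnz k (q₀ + q₁) • (f ⊗ₜ[k] (g ∘ₗ dX)))
    (hb1 : ∀ (q₀ q₁ : ℤ) (f : W →ₗ[k] V) (g : V →ₗ[k] W),
      (∀ m : ℤ, ∀ w ∈ ℬW m, f w ∈ ℬ (m + q₀)) →
      (∀ m : ℤ, ∀ v ∈ ℬ m, g v ∈ ℬW (m + q₁)) →
      b1 (f ⊗ₜ[k] g) =
        (sgnz k q₀ • (f ∘ₗ g), - sgnz k (q₀ * (q₁ + 1)) • (g ∘ₗ f))) :
    b0 ((i ∘ₗ πW) ⊗ₜ[k] p) = 0 ∧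
    b1 ((i ∘ₗ πW) ⊗ₜ[k] p) = (i ∘ₗ πW ∘ₗ p, 0) - (0, πW) ∧
    LinearMap.trace k W (εW ∘ₗ πW) = sgnz k n * (Module.finrank k (ℬW n) : k) := by

  have hmem : ∀ w : W, πW w ∈ ℬW n := by
    intro w
    have hw : w ∈ (⊤ : Submodule k W) := trivial
    rw [← hintW.submodule_iSup_eq_top] at hw
    induction hw using Submodule.iSup_induction' with
    | mem m x hx =>
      by_cases hm : m = n
      · subst hm; rw [hπW₁ x hx]; exact hx
      · rw [hπW₂ m hm x hx]; exact Submodule.zero_mem _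
    | zero => simp
    | add x y _ _ hx hy => rw [map_add]; exact Submodule.add_mem _ hx hy
  have hf : ∀ m : ℤ, ∀ w ∈ ℬW m, (i ∘ₗ πW) w ∈ ℬ (m + 0) := by
    intro m w hw
    rw [add_zero]
    by_cases hm : m = n
    · subst hm
      simp only [LinearMap.comp_apply, hπW₁ w hw]
      exact hi m w hw
    · simp only [LinearMap.comp_apply, hπW₂ m hm w hw, map_zero]
      exact Submodule.zero_mem _
  have hg : ∀ m : ℤ, ∀ v ∈ ℬ m, p v ∈ ℬW (m + 0) := by
    intro m v hv; rw [add_zero]; exact hp m v hv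
  have hsgn0 : sgnz k 0 = 1 := by simp [sgnz]
  have hd_comp : dX ∘ₗ (i ∘ₗ πW) = 0 := by
    ext w; simp [hdi]
  have hpd_comp : p ∘ₗ dX = 0 := by
    ext v; simp [hpd]
  have hpi_comp : p ∘ₗ (i ∘ₗ πW) = πW := by
    ext w; simp [hpi]
  refine ⟨?_, ?_, ?_⟩
  · rw [hb0 0 0 _ _ hf hg, hd_comp, hpd_comp]
    simp [hsgn0]
  · rw [hb1 0 0 _ _ hf hg, hpi_comp]
    have : (0 : ℤ) * (0 + 1) = 0 := by ring
    rw [this, hsgn0]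
    ext <;> simp
  · have hP : LinearMap.IsProj (ℬW n) πW := ⟨hmem, hπW₁⟩
    have hε : εW ∘ₗ πW = sgnz k n • πW := by
      ext w
      simp only [LinearMap.comp_apply, LinearMap.smul_apply]
      exact hεW n _ (hmem w)
    rw [hε, map_smul, hP.trace, smul_eq_mul]

end
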